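/- arXiv:1509.05792 — 5 statements merged into one kernel-verified Lean document; each statement's English description precedes it below -/
import Mathlib

section
/- Let X be a Banach space, let S : [0,∞) → (X → X) satisfy the semigroup identities S(0) = id and S(t+s) = S(t) ∘ S(s) for all t,s ≥ 0, and let z_e ∈ X be an equilibrium, i.e. S(t) z_e = z_e for all t ≥ 0. Let T : [0,∞) → B(X) be a family of bounded linear operators on X such that: (H1) there exist M ≥ 1 and γ > 0 with ‖T(t)‖ ≤ M e^{−γ t} for all t ≥ 0 (the linearization is exponentially stable); (H2) S(t) is Fréchet differentiable at z_e with derivative T(t), uniformly on compact time intervals, i.e. for every t̄ > 0 and every ε > 0 there exists δ > 0 such that for all τ ∈ [0, t̄] and all z₀ with ‖z₀ − z_e‖ < δ one has ‖S(τ) z₀ − z_e − T(τ)(z₀ − z_e)‖ ≤ ε ‖z₀ − z_e‖. Then z_e is locally exponentially stable for the nonlinear semigroup: there exist C ≥ 1, α > 0 and δ > 0 such that whenever ‖z₀ − z_e‖ < δ, it holds that ‖S(t) z₀ − z_e‖ ≤ C e^{−α t} ‖z₀ − z_e‖ for all t ≥ 0. -/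
/-!
Choose a time `τ` at which the linearization contracts, `‖T τ‖ ≤ 1/4`, and let `δ` be the
radius on which `S` is `1/4`-close to `T` on `[0, τ]`. On the `δ`-ball, `S τ` then contracts
distances to `z_e` by `1/2` and every `S s` with `s ∈ [0, τ]` enlarges them by at most
`M + 1/4`, where `M` bounds `‖T‖`. The ball is thus invariant under `S τ`, so the contraction
iterates: `S (n τ)` contracts by `2⁻ⁿ`, and writing `t = s + n τ` with `s ∈ [0, τ]` turns `2⁻ⁿ`
into an exponential in `t`.
-/

open Real Set Filter

def IsLocallyExpStable {X : Type*} [SeminormedAddCommGroup X] (S : ℝ → X → X) (z_e : X) :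
    Prop :=
  ∃ C α δ : ℝ, 1 ≤ C ∧ 0 < α ∧ 0 < δ ∧
    ∀ z₀ : X, ‖z₀ - z_e‖ < δ → ∀ t : ℝ, 0 ≤ t →
      ‖S t z₀ - z_e‖ ≤ C * exp (-α * t) * ‖z₀ - z_e‖

lemma norm_le_of_norm_sub_apply_le {𝕜 E F : Type*} [NontriviallyNormedField 𝕜]
    [SeminormedAddCommGroup E] [SeminormedAddCommGroup F] [NormedSpace 𝕜 E] [NormedSpace 𝕜 F]
    (L : E →L[𝕜] F) {x : E} {y : F} {ε : ℝ} (h : ‖y - L x‖ ≤ ε * ‖x‖) :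
    ‖y‖ ≤ (‖L‖ + ε) * ‖x‖ :=
  calc ‖y‖ ≤ ‖y - L x‖ + ‖L x‖ := norm_le_norm_sub_add y (L x)
    _ ≤ ε * ‖x‖ + ‖L‖ * ‖x‖ := add_le_add h (L.le_opNorm x)
    _ = (‖L‖ + ε) * ‖x‖ := by ring

lemma exists_pos_mul_exp_neg_le (M : ℝ) {γ ε : ℝ} (hγ : 0 < γ) (hε : 0 < ε) :
    ∃ t > 0, M * exp (-γ * t) ≤ ε := by
  have hlim : Tendsto (fun t => M * exp (-γ * t)) atTop (nhds 0) := by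
    simpa using ((tendsto_exp_atBot.comp
      (tendsto_id.const_mul_atTop_of_neg (neg_neg_of_pos hγ))).const_mul M)
  exact ((eventually_gt_atTop 0).and (hlim.eventually (ge_mem_nhds hε))).exists

lemma exists_eq_add_nat_mul {τ t : ℝ} (hτ : 0 < τ) (ht : 0 ≤ t) :
    ∃ n : ℕ, ∃ s ∈ Icc 0 τ, t = s + n * τ := by
  obtain ⟨n, hn_le, hlt_succ⟩ : ∃ n : ℕ, (n : ℝ) ≤ t / τ ∧ t / τ < n + 1 :=
    ⟨⌊t / τ⌋₊, Nat.floor_le (div_nonneg ht hτ.le), Nat.lt_floor_add_one _⟩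
  rw [le_div_iff₀ hτ] at hn_le
  rw [div_lt_iff₀ hτ] at hlt_succ
  exact ⟨n, t - n * τ, ⟨by linarith, by linarith⟩, by ring⟩

lemma pow_le_inv_mul_exp_of_le_succ_mul {q τ t : ℝ} {n : ℕ} (hq0 : 0 < q) (hq1 : q ≤ 1)
    (hτ : 0 < τ) (ht : t ≤ (n + 1) * τ) :
    q ^ n ≤ q⁻¹ * exp (log q / τ * t) := by
  have hlog : log q ≤ 0 := log_nonpos hq0.le hq1
  have hexponent : n * log q ≤ -log q + log q / τ * t := by
    have : t / τ ≤ n + 1 := (div_le_iff₀ hτ).2 ht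
    have : (n + 1) * log q ≤ t / τ * log q := mul_le_mul_of_nonpos_right this hlog
    linarith [show t / τ * log q = log q / τ * t by ring]
  calc q ^ n = exp (n * log q) := by rw [exp_nat_mul, exp_log hq0]
    _ ≤ exp (-log q + log q / τ * t) := exp_le_exp.2 hexponent
    _ = q⁻¹ * exp (log q / τ * t) := by rw [exp_add, exp_neg, exp_log hq0]

section Semigroup

variable {X : Type*} [SeminormedAddCommGroup X] {S : ℝ → X → X} {z_e : X} {τ δ q : ℝ}

lemma norm_apply_nat_mul_sub_le_pow_mul (hS0 : S 0 = id)
    (hS : ∀ t s : ℝ, 0 ≤ t → 0 ≤ s → S (t + s) = S t ∘ S s) (hτ : 0 ≤ τ) (hq0 : 0 ≤ q)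
    (hq1 : q ≤ 1) (hcontr : ∀ y : X, ‖y - z_e‖ < δ → ‖S τ y - z_e‖ ≤ q * ‖y - z_e‖)
    {z₀ : X} (hz₀ : ‖z₀ - z_e‖ < δ) (n : ℕ) :
    ‖S (n * τ) z₀ - z_e‖ ≤ q ^ n * ‖z₀ - z_e‖ := by
  induction n with
  | zero => simp [hS0]
  | succ n ih =>
    have hball : ‖S (n * τ) z₀ - z_e‖ < δ :=
      ih.trans_lt ((mul_le_of_le_one_left (norm_nonneg _) (pow_le_one₀ hq0 hq1)).trans_lt hz₀)
    have hstep : S ((n + 1 : ℕ) * τ) z₀ = S τ (S (n * τ) z₀) := by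
      rw [show ((n + 1 : ℕ) : ℝ) * τ = τ + n * τ by push_cast; ring,
        hS τ _ hτ (by positivity), Function.comp_apply]
    calc ‖S ((n + 1 : ℕ) * τ) z₀ - z_e‖ ≤ q * ‖S (n * τ) z₀ - z_e‖ := hstep ▸ hcontr _ hball
      _ ≤ q * (q ^ n * ‖z₀ - z_e‖) := mul_le_mul_of_nonneg_left ih hq0
      _ = q ^ (n + 1) * ‖z₀ - z_e‖ := by ring

theorem isLocallyExpStable_of_contraction (hS0 : S 0 = id)
    (hS : ∀ t s : ℝ, 0 ≤ t → 0 ≤ s → S (t + s) = S t ∘ S s) {K : ℝ} (hτ : 0 < τ) (hδ : 0 < δ)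
    (hK : 1 ≤ K) (hq0 : 0 < q) (hq1 : q < 1)
    (hgrowth : ∀ s ∈ Icc 0 τ, ∀ y : X, ‖y - z_e‖ < δ → ‖S s y - z_e‖ ≤ K * ‖y - z_e‖)
    (hcontr : ∀ y : X, ‖y - z_e‖ < δ → ‖S τ y - z_e‖ ≤ q * ‖y - z_e‖) :
    IsLocallyExpStable S z_e := by
  refine ⟨K * q⁻¹, -log q / τ, δ,
    one_le_mul_of_one_le_of_one_le hK ((one_le_inv₀ hq0).2 hq1.le),
    div_pos (neg_pos.2 (log_neg hq0 hq1)) hτ, hδ, fun z₀ hz₀ t ht => ?_⟩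
  obtain ⟨n, s, hs, rfl⟩ := exists_eq_add_nat_mul hτ ht
  have hiter := norm_apply_nat_mul_sub_le_pow_mul hS0 hS hτ.le hq0.le hq1.le hcontr hz₀ n
  have hball : ‖S (n * τ) z₀ - z_e‖ < δ :=
    hiter.trans_lt <|
      (mul_le_of_le_one_left (norm_nonneg _) (pow_le_one₀ hq0.le hq1.le)).trans_lt hz₀
  have hpow : q ^ n ≤ q⁻¹ * exp (-(-log q / τ) * (s + n * τ)) := by
    rw [neg_div, neg_neg]
    exact pow_le_inv_mul_exp_of_le_succ_mul hq0 hq1.le hτ (by linarith [hs.2])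
  calc ‖S (s + n * τ) z₀ - z_e‖ = ‖S s (S (n * τ) z₀) - z_e‖ := by
        rw [hS s _ hs.1 (by positivity), Function.comp_apply]
    _ ≤ K * ‖S (n * τ) z₀ - z_e‖ := hgrowth s hs _ hball
    _ ≤ K * (q ^ n * ‖z₀ - z_e‖) := mul_le_mul_of_nonneg_left hiter (by linarith)
    _ ≤ K * (q⁻¹ * exp (-(-log q / τ) * (s + n * τ)) * ‖z₀ - z_e‖) := by gcongr
    _ = K * q⁻¹ * exp (-(-log q / τ) * (s + n * τ)) * ‖z₀ - z_e‖ := by ring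

end Semigroup

theorem frechet_differentiable_semigroup_exp_stable_linearization_implies_loc_exp_stable_general
    {X : Type*} [NormedAddCommGroup X] [NormedSpace ℝ X]
    (S : ℝ → X → X) (T : ℝ → X →L[ℝ] X) (z_e : X)
    (hS0 : S 0 = id)
    (hSsemigroup : ∀ t s : ℝ, 0 ≤ t → 0 ≤ s → S (t + s) = S t ∘ S s)
    (hH1 : ∃ M γ : ℝ, 1 ≤ M ∧ 0 < γ ∧
      ∀ t : ℝ, 0 ≤ t → ‖T t‖ ≤ M * Real.exp (-γ * t))
    (hH2 : ∀ tbar : ℝ, 0 < tbar → ∀ ε : ℝ, 0 < ε → ∃ δ : ℝ, 0 < δ ∧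
      ∀ τ : ℝ, τ ∈ Set.Icc (0 : ℝ) tbar → ∀ z₀ : X, ‖z₀ - z_e‖ < δ →
        ‖S τ z₀ - z_e - T τ (z₀ - z_e)‖ ≤ ε * ‖z₀ - z_e‖) :
    ∃ C α δ : ℝ, 1 ≤ C ∧ 0 < α ∧ 0 < δ ∧
      ∀ z₀ : X, ‖z₀ - z_e‖ < δ → ∀ t : ℝ, 0 ≤ t →
        ‖S t z₀ - z_e‖ ≤ C * Real.exp (-α * t) * ‖z₀ - z_e‖ := by
  obtain ⟨M, γ, hM, hγ, hT⟩ := hH1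
  obtain ⟨tbar, htbar, hT_tbar⟩ :=
    exists_pos_mul_exp_neg_le M hγ (by norm_num : (0 : ℝ) < 1 / 4)
  obtain ⟨δ, hδ, hclose⟩ := hH2 tbar htbar (1 / 4) (by norm_num)
  have hT_le : ∀ t : ℝ, 0 ≤ t → ‖T t‖ ≤ M := fun t ht =>
    (hT t ht).trans (mul_le_of_le_one_right (by linarith)
      (exp_le_one_iff.2 (by nlinarith)))
  refine isLocallyExpStable_of_contraction (K := M + 1 / 4) (q := 1 / 2) hS0 hSsemigroup htbar hδ
    (by linarith) (by norm_num) (by norm_num) (fun s hs y hy => ?_) (fun y hy => ?_)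
  · refine (norm_le_of_norm_sub_apply_le (T s) (hclose s hs y hy)).trans ?_
    gcongr
    exact hT_le s hs.1
  · have hnear := hclose tbar ⟨htbar.le, le_rfl⟩ y hy
    refine (norm_le_of_norm_sub_apply_le (T tbar) hnear).trans ?_
    gcongr
    linarith [hT tbar htbar.le]

/-- Lyapunov's indirect method, stability part: if the nonlinear semigroup `S` is
Fréchet differentiable at the equilibrium `z_e` (uniformly on compact time intervals)
with derivative the exponentially stable linear semigroup `T`, then `z_e` is locally
exponentially stable for `S`. -/
theorem frechet_differentiable_semigroup_exp_stable_linearization_implies_loc_exp_stable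
    {X : Type*} [NormedAddCommGroup X] [NormedSpace ℝ X] [CompleteSpace X]
    (S : ℝ → X → X) (T : ℝ → X →L[ℝ] X) (z_e : X)
    (hS0 : S 0 = id)
    (hSsemigroup : ∀ t s : ℝ, 0 ≤ t → 0 ≤ s → S (t + s) = S t ∘ S s)
    (hEq : ∀ t : ℝ, 0 ≤ t → S t z_e = z_e)
    (hH1 : ∃ M γ : ℝ, 1 ≤ M ∧ 0 < γ ∧
      ∀ t : ℝ, 0 ≤ t → ‖T t‖ ≤ M * Real.exp (-γ * t))
    (hH2 : ∀ tbar : ℝ, 0 < tbar → ∀ ε : ℝ, 0 < ε → ∃ δ : ℝ, 0 < δ ∧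
      ∀ τ : ℝ, τ ∈ Set.Icc (0 : ℝ) tbar → ∀ z₀ : X, ‖z₀ - z_e‖ < δ →
        ‖S τ z₀ - z_e - T τ (z₀ - z_e)‖ ≤ ε * ‖z₀ - z_e‖) :
    ∃ C α δ : ℝ, 1 ≤ C ∧ 0 < α ∧ 0 < δ ∧
      ∀ z₀ : X, ‖z₀ - z_e‖ < δ → ∀ t : ℝ, 0 ≤ t →
        ‖S t z₀ - z_e‖ ≤ C * Real.exp (-α * t) * ‖z₀ - z_e‖ :=
  frechet_differentiable_semigroup_exp_stable_linearization_implies_loc_exp_stable_general S T z_e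
    hS0 hSsemigroup hH1 hH2
end

section
/- Let X be a Banach space, let S : [0,∞) → (X → X) satisfy S(0) = id and S(t+s) = S(t) ∘ S(s) for all t,s ≥ 0, let z_e be an equilibrium (S(t) z_e = z_e for all t), and let T : [0,∞) → B(X) be a family of bounded linear operators such that S(t) is Fréchet differentiable at z_e with derivative T(t), uniformly in t: for every ε > 0 there exists δ > 0 such that for all t ≥ 0 and all h with ‖h‖ < δ, ‖S(t)(z_e + h) − z_e − T(t) h‖ ≤ ε ‖h‖. If z_e is a locally stable equilibrium of the nonlinear semigroup (for every ε > 0 there exists δ > 0 such that ‖z₀ − z_e‖ < δ implies ‖S(t) z₀ − z_e‖ ≤ ε for all t ≥ 0), then the linearization is stable: for every ε > 0 there exists δ > 0 such that for all t ≥ 0 and all h with ‖h‖ < δ, ‖T(t) h‖ ≤ ε. -/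
/-!
By the triangle inequality,
`‖T t h‖ ≤ ‖S t (z_e + h) - z_e‖ + ‖S t (z_e + h) - z_e - T t h‖`.
Local stability makes the first term at most `ε / 2` once `‖h‖` is small, and the uniform
Fréchet estimate with constant `1` bounds the second by `‖h‖`; so `‖h‖ < ε / 2` suffices.
-/

theorem exists_norm_apply_le_of_stable_of_approx
    {ι E F : Type*} [SeminormedAddCommGroup E] [SeminormedAddCommGroup F]
    (s : Set ι) (f L : ι → E → F) (x : E) (y : F)
    (hApprox : ∃ δ : ℝ, 0 < δ ∧
      ∀ i ∈ s, ∀ h : E, ‖h‖ < δ → ‖f i (x + h) - y - L i h‖ ≤ ‖h‖)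
    (hStable : ∀ ε : ℝ, 0 < ε → ∃ δ : ℝ, 0 < δ ∧
      ∀ z : E, ‖z - x‖ < δ → ∀ i ∈ s, ‖f i z - y‖ ≤ ε) :
    ∀ ε : ℝ, 0 < ε → ∃ δ : ℝ, 0 < δ ∧ ∀ i ∈ s, ∀ h : E, ‖h‖ < δ → ‖L i h‖ ≤ ε := by
  intro ε hε
  obtain ⟨δ₁, hδ₁, hA⟩ := hApprox
  obtain ⟨δ₂, hδ₂, hS⟩ := hStable (ε / 2) (half_pos hε)
  refine ⟨min (min δ₁ δ₂) (ε / 2), by positivity, fun i hi h hh => ?_⟩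
  simp only [lt_min_iff] at hh
  obtain ⟨⟨hh₁, hh₂⟩, hh₃⟩ := hh
  calc ‖L i h‖ ≤ ‖f i (x + h) - y‖ + ‖f i (x + h) - y - L i h‖ :=
        norm_le_norm_add_norm_sub _ _
    _ ≤ ε / 2 + ‖h‖ :=
        add_le_add (hS _ (by simpa using hh₂) i hi) (hA i hi h hh₁)
    _ ≤ ε := by linarith

theorem stable_nonlinear_implies_stable_linearization_general
    {X : Type*} [NormedAddCommGroup X] [NormedSpace ℝ X]
    (S : ℝ → X → X) (T : ℝ → X →L[ℝ] X) (z_e : X)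
    (hFrechet : ∀ ε : ℝ, 0 < ε → ∃ δ : ℝ, 0 < δ ∧
      ∀ t : ℝ, 0 ≤ t → ∀ h : X, ‖h‖ < δ →
        ‖S t (z_e + h) - z_e - T t h‖ ≤ ε * ‖h‖)
    (hStable : ∀ ε : ℝ, 0 < ε → ∃ δ : ℝ, 0 < δ ∧
      ∀ z₀ : X, ‖z₀ - z_e‖ < δ → ∀ t : ℝ, 0 ≤ t → ‖S t z₀ - z_e‖ ≤ ε) :
    ∀ ε : ℝ, 0 < ε → ∃ δ : ℝ, 0 < δ ∧
      ∀ t : ℝ, 0 ≤ t → ∀ h : X, ‖h‖ < δ → ‖T t h‖ ≤ ε := by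
  have hApprox : ∃ δ : ℝ, 0 < δ ∧ ∀ t ∈ Set.Ici (0 : ℝ), ∀ h : X, ‖h‖ < δ →
      ‖S t (z_e + h) - z_e - T t h‖ ≤ ‖h‖ := by
    simpa only [one_mul, Set.mem_Ici] using hFrechet 1 one_pos
  exact exists_norm_apply_le_of_stable_of_approx (Set.Ici 0) S (fun t => T t) z_e z_e
    hApprox hStable

/-- Lyapunov's indirect method, instability part (contrapositive): if the nonlinear
semigroup `S` is Fréchet differentiable at the equilibrium `z_e` with derivative the
linear semigroup `T`, uniformly in time, and `z_e` is a locally stable equilibrium of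
`S`, then the linearization `T` is stable. -/
theorem stable_nonlinear_implies_stable_linearization
    {X : Type*} [NormedAddCommGroup X] [NormedSpace ℝ X] [CompleteSpace X]
    (S : ℝ → X → X) (T : ℝ → X →L[ℝ] X) (z_e : X)
    (hS0 : S 0 = id)
    (hSsemigroup : ∀ t s : ℝ, 0 ≤ t → 0 ≤ s → S (t + s) = S t ∘ S s)
    (hEq : ∀ t : ℝ, 0 ≤ t → S t z_e = z_e)
    (hFrechet : ∀ ε : ℝ, 0 < ε → ∃ δ : ℝ, 0 < δ ∧
      ∀ t : ℝ, 0 ≤ t → ∀ h : X, ‖h‖ < δ →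
        ‖S t (z_e + h) - z_e - T t h‖ ≤ ε * ‖h‖)
    (hStable : ∀ ε : ℝ, 0 < ε → ∃ δ : ℝ, 0 < δ ∧
      ∀ z₀ : X, ‖z₀ - z_e‖ < δ → ∀ t : ℝ, 0 ≤ t → ‖S t z₀ - z_e‖ ≤ ε) :
    ∀ ε : ℝ, 0 < ε → ∃ δ : ℝ, 0 < δ ∧
      ∀ t : ℝ, 0 ≤ t → ∀ h : X, ‖h‖ < δ → ‖T t h‖ ≤ ε :=
  stable_nonlinear_implies_stable_linearization_general S T z_e hFrechet hStable
end

section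
/- For every δ > 0 there exists z₀ ∈ ℓ²(ℕ, ℝ) with 0 < ‖z₀‖_{ℓ²} < δ such that every component of z₀ is an equilibrium of the corresponding scalar equation: −(1/(n+1)) (z₀)_n + (z₀)_n² = 0 for all n ∈ ℕ. (Explicitly, one may take z₀ to be the sequence whose n-th entry is 1/(n+1) and all other entries 0, for n large enough that 1/(n+1) < δ.) Consequently, the zero equilibrium of Zwart's nonlinear system admits nonzero equilibria arbitrarily close to it, and is therefore not asymptotically stable. -/
theorem neg_mul_add_sq_eq_zero_iff {R : Type*} [CommRing R] [NoZeroDivisors R] {a x : R} :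
    -a * x + x ^ 2 = 0 ↔ x = 0 ∨ x = a := by
  rw [show -a * x + x ^ 2 = x * (x - a) by ring, mul_eq_zero, sub_eq_zero]

theorem lp.single_apply_eq_zero_or_eq {α E : Type*} [DecidableEq α] [NormedAddCommGroup E]
    (p : ENNReal) (f : α → E) (i j : α) :
    lp.single (E := fun _ => E) p i (f i) j = 0 ∨
      lp.single (E := fun _ => E) p i (f i) j = f j := by
  by_cases hji : j = i
  · subst hji
    exact .inr (lp.single_apply_self (E := fun _ => E) p j (f j))
  · exact .inl (lp.single_apply_ne (E := fun _ => E) p i (f i) hji)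

/-- Zwart's nonlinear system has nonzero equilibria arbitrarily close to the zero
equilibrium: for every `δ > 0` there is `z₀ ∈ ℓ²(ℕ, ℝ)` with `0 < ‖z₀‖ < δ` all of
whose components satisfy the equilibrium equation `−(1/(n+1)) (z₀)_n + (z₀)_n² = 0`. -/
theorem zwart_nonzero_equilibria_near_zero :
    ∀ δ : ℝ, 0 < δ → ∃ z₀ : lp (fun _ : ℕ => ℝ) 2,
      0 < ‖z₀‖ ∧ ‖z₀‖ < δ ∧
      ∀ n : ℕ, -(1 / ((n : ℝ) + 1)) * z₀ n + (z₀ n) ^ 2 = 0 := by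
  intro δ hδ
  obtain ⟨N, hN⟩ := exists_nat_one_div_lt hδ
  set equilibrium : ℕ → ℝ := fun n => 1 / ((n : ℝ) + 1)
  have hpos : 0 < equilibrium N := by positivity
  have hnorm : ‖lp.single (E := fun _ : ℕ => ℝ) 2 N (equilibrium N)‖ = equilibrium N := by
    rw [lp.norm_single (by norm_num), Real.norm_of_nonneg hpos.le]
  refine ⟨lp.single 2 N (equilibrium N), hnorm.symm ▸ hpos, hnorm.symm ▸ hN, fun n => ?_⟩
  exact neg_mul_add_sq_eq_zero_iff.mpr (lp.single_apply_eq_zero_or_eq 2 equilibrium N n)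
end

section
/- Let Z be a real Hilbert space, let f : Z → Z, let s ⊆ Z, and let K ≥ 0 be such that f is K-Lipschitz on s. Let T > 0 and let y, z : ℝ → Z and g, h : ℝ → Z be such that for every t ∈ [0, T]: y(t) ∈ s, z(t) ∈ s, y is differentiable at t with y'(t) = g(t) + f(y(t)), z is differentiable at t with z'(t) = h(t) + f(z(t)), and ⟨g(t) − h(t), y(t) − z(t)⟩ ≤ 0. Then for every t ∈ [0, T], ‖y(t) − z(t)‖² ≤ e^{2 K t} ‖y(0) − z(0)‖². -/
open Set Real
open scoped RealInnerProductSpace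

/-!
The energy `w(t) = ‖y(t) - z(t)‖²` has derivative `2⟪y' - z', y - z⟫`. Splitting `y' - z'` into
`(g - h) + (f(y) - f(z))`, dissipativity kills the first part and the Lipschitz bound with
Cauchy–Schwarz controls the second, so `w' ≤ 2K w`; Grönwall's inequality then gives
`w(t) ≤ e^{2Kt} w(0)`.
-/

theorem le_mul_exp_of_hasDerivWithinAt_le_mul {w w' : ℝ → ℝ} {C a b : ℝ}
    (hcont : ContinuousOn w (Icc a b))
    (hderiv : ∀ t ∈ Ico a b, HasDerivWithinAt w (w' t) (Ici t) t)
    (hbound : ∀ t ∈ Ico a b, w' t ≤ C * w t) :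
    ∀ t ∈ Icc a b, w t ≤ w a * exp (C * (t - a)) := by
  intro t ht
  have := le_gronwallBound_of_liminf_deriv_right_le hcont
    (fun τ hτ _ hr => (hderiv τ hτ).liminf_right_slope_le hr) le_rfl
    (fun τ hτ => by rw [add_zero]; exact hbound τ hτ) t ht
  rwa [gronwallBound_ε0] at this

theorem real_inner_add_le_of_inner_nonpos_of_norm_le {E : Type*} [NormedAddCommGroup E]
    [InnerProductSpace ℝ E] {a b u : E} {K : ℝ} (ha : ⟪a, u⟫ ≤ 0) (hb : ‖b‖ ≤ K * ‖u‖) :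
    ⟪a + b, u⟫ ≤ K * ‖u‖ ^ 2 :=
  calc ⟪a + b, u⟫ = ⟪a, u⟫ + ⟪b, u⟫ := inner_add_left a b u
    _ ≤ 0 + ‖b‖ * ‖u‖ := add_le_add ha (real_inner_le_norm b u)
    _ ≤ K * ‖u‖ * ‖u‖ := by rw [zero_add]; gcongr
    _ = K * ‖u‖ ^ 2 := by ring

theorem norm_sq_le_exp_mul_of_inner_deriv_le {E : Type*} [NormedAddCommGroup E]
    [InnerProductSpace ℝ E] {u u' : ℝ → E} {K a b : ℝ}
    (hu : ∀ t ∈ Icc a b, HasDerivAt u (u' t) t)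
    (hinner : ∀ t ∈ Ico a b, ⟪u' t, u t⟫ ≤ K * ‖u t‖ ^ 2) :
    ∀ t ∈ Icc a b, ‖u t‖ ^ 2 ≤ ‖u a‖ ^ 2 * exp (2 * K * (t - a)) := by
  have hw : ∀ t ∈ Icc a b, HasDerivAt (‖u ·‖ ^ 2) (2 * ⟪u t, u' t⟫) t :=
    fun t ht => (hu t ht).norm_sq
  refine le_mul_exp_of_hasDerivWithinAt_le_mul
    (fun t ht => (hw t ht).continuousAt.continuousWithinAt)
    (fun t ht => (hw t (Ico_subset_Icc_self ht)).hasDerivWithinAt) fun t ht => ?_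
  rw [real_inner_comm, mul_assoc]
  exact mul_le_mul_of_nonneg_left (hinner t ht) zero_le_two

theorem dissipative_trajectory_divergence_estimate_general
    {Z : Type*} [NormedAddCommGroup Z] [InnerProductSpace ℝ Z]
    (f : Z → Z) (s : Set Z) (K : ℝ)
    (hLip : ∀ x ∈ s, ∀ y ∈ s, ‖f x - f y‖ ≤ K * ‖x - y‖)
    (T : ℝ) (y z g h : ℝ → Z)
    (hy_mem : ∀ t ∈ Set.Icc (0 : ℝ) T, y t ∈ s)
    (hz_mem : ∀ t ∈ Set.Icc (0 : ℝ) T, z t ∈ s)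
    (hy' : ∀ t ∈ Set.Icc (0 : ℝ) T, HasDerivAt y (g t + f (y t)) t)
    (hz' : ∀ t ∈ Set.Icc (0 : ℝ) T, HasDerivAt z (h t + f (z t)) t)
    (hdiss : ∀ t ∈ Set.Icc (0 : ℝ) T, inner ℝ (g t - h t) (y t - z t) ≤ (0 : ℝ)) :
    ∀ t ∈ Set.Icc (0 : ℝ) T,
      ‖y t - z t‖ ^ 2 ≤ Real.exp (2 * K * t) * ‖y 0 - z 0‖ ^ 2 := by
  have hdiff : ∀ t ∈ Icc 0 T,
      HasDerivAt (y - z) ((g t - h t) + (f (y t) - f (z t))) t := by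
    intro t ht
    convert (hy' t ht).sub (hz' t ht) using 1
    abel
  have hinner : ∀ t ∈ Ico 0 T,
      ⟪(g t - h t) + (f (y t) - f (z t)), y t - z t⟫ ≤ K * ‖y t - z t‖ ^ 2 := fun t ht =>
    have ht' := Ico_subset_Icc_self ht
    real_inner_add_le_of_inner_nonpos_of_norm_le (hdiss t ht')
      (hLip _ (hy_mem t ht') _ (hz_mem t ht'))
  intro t ht
  simpa [mul_comm] using norm_sq_le_exp_mul_of_inner_deriv_le hdiff hinner t ht

/-- Trajectory-divergence estimate for the quasilinear equation `ż = A z + f(z)` with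
`A` dissipative: if `f` is `K`-Lipschitz on `s`, `y' = g + f(y)`, `z' = h + f(z)` on
`[0, T]` with `⟨g − h, y − z⟩ ≤ 0`, then `‖y(t) − z(t)‖² ≤ e^{2Kt} ‖y(0) − z(0)‖²`. -/
theorem dissipative_trajectory_divergence_estimate
    {Z : Type*} [NormedAddCommGroup Z] [InnerProductSpace ℝ Z] [CompleteSpace Z]
    (f : Z → Z) (s : Set Z) (K : ℝ) (hK : 0 ≤ K)
    (hLip : ∀ x ∈ s, ∀ y ∈ s, ‖f x - f y‖ ≤ K * ‖x - y‖)
    (T : ℝ) (hT : 0 < T) (y z g h : ℝ → Z)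
    (hy_mem : ∀ t ∈ Set.Icc (0 : ℝ) T, y t ∈ s)
    (hz_mem : ∀ t ∈ Set.Icc (0 : ℝ) T, z t ∈ s)
    (hy' : ∀ t ∈ Set.Icc (0 : ℝ) T, HasDerivAt y (g t + f (y t)) t)
    (hz' : ∀ t ∈ Set.Icc (0 : ℝ) T, HasDerivAt z (h t + f (z t)) t)
    (hdiss : ∀ t ∈ Set.Icc (0 : ℝ) T, inner ℝ (g t - h t) (y t - z t) ≤ (0 : ℝ)) :
    ∀ t ∈ Set.Icc (0 : ℝ) T,
      ‖y t - z t‖ ^ 2 ≤ Real.exp (2 * K * t) * ‖y 0 - z 0‖ ^ 2 :=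
  dissipative_trajectory_divergence_estimate_general f s K hLip T y z g h hy_mem hz_mem hy' hz'
    hdiss
end

section
/- Let Z be a real Hilbert space, and let constants L ≥ 0, c ≥ 0, K and M satisfy 0 ≤ M < K. Let t_f > 0 and let φ : ℝ → Z with φ(0) = 0 be such that for every t ∈ [0, t_f], φ is differentiable at t with φ'(t) = w(t) + B(t)(φ(t)) + r(t), where w(t) ∈ Z satisfies ⟨w(t), φ(t)⟩ ≤ 0, B(t) is a bounded linear operator on Z with ‖B(t)‖ ≤ M, and ‖r(t)‖ ≤ (L/2) c e^{2 K t}. Then for every t ∈ [0, t_f], ‖φ(t)‖ ≤ ( L c / (2 (K − M)) ) ( e^{2 K t_f} − e^{2 M t_f} ). -/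
/-!
Wherever `φ ≠ 0`, dissipativity `⟪w, φ⟫ ≤ 0` bounds the right derivative of `‖φ‖` by
`M ‖φ‖ + ‖r‖`. The function `u t = L c / (2 (K - M)) (e^{2Kt} - e^{2Mt})` vanishes at `0`, is
nondecreasing on `[0, ∞)` and satisfies `u' ≥ M u + (L/2) c e^{2Kt}`, so a fencing argument gives
`‖φ‖ ≤ u`. The fence is made strict by adding `δ e^{(M+1)t}`; being positive, it can only be
touched where `φ ≠ 0`, so the zeros of `φ` (where nothing bounds `w`) do no harm.
-/

open Set Filter Topology
open scoped RealInnerProductSpace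

section NormRightDeriv

variable {E : Type*} [NormedAddCommGroup E] [InnerProductSpace ℝ E]

open Classical in
/-- At a zero of `φ` the norm is only right-differentiable, with right derivative `‖φ'‖`. -/
noncomputable def normRightDeriv (p v : E) : ℝ :=
  if p = 0 then ‖v‖ else ⟪p, v⟫ / ‖p‖

theorem HasDerivAt.hasDerivWithinAt_norm_Ici {φ : ℝ → E} {v : E} {x : ℝ}
    (h : HasDerivAt φ v x) :
    HasDerivWithinAt (fun t => ‖φ t‖) (normRightDeriv (φ x) v) (Ici x) x := by
  by_cases h0 : φ x = 0
  · rw [normRightDeriv, if_pos h0, hasDerivWithinAt_iff_tendsto_slope]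
    have hslope : Tendsto (fun z => ‖slope φ x z‖) (𝓝[Ici x \ {x}] x) (𝓝 ‖v‖) :=
      ((hasDerivAt_iff_tendsto_slope.1 h).mono_left
        (nhdsWithin_mono _ fun _ hz => hz.2)).norm
    refine hslope.congr' ?_
    filter_upwards [self_mem_nhdsWithin] with z hz
    have hxz : 0 < z - x := sub_pos.2 (lt_of_le_of_ne hz.1 (Ne.symm hz.2))
    rw [slope_def_module, slope_def_field, h0, sub_zero, norm_zero, sub_zero, norm_smul,
      norm_inv, Real.norm_of_nonneg hxz.le, div_eq_inv_mul]
  · have hsq : HasDerivAt (fun t => √(‖φ t‖ ^ 2)) (2 * ⟪φ x, v⟫ / (2 * √(‖φ x‖ ^ 2))) x :=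
      h.norm_sq.sqrt (pow_ne_zero 2 (norm_ne_zero_iff.2 h0))
    simp only [Real.sqrt_sq (norm_nonneg _)] at hsq
    rw [normRightDeriv, if_neg h0, ← mul_div_mul_left _ _ two_ne_zero]
    exact hsq.hasDerivWithinAt

theorem normRightDeriv_add_le {p w r : E} {A : E →L[ℝ] E} {M : ℝ} (hp : p ≠ 0)
    (hw : ⟪w, p⟫ ≤ 0) (hA : ‖A‖ ≤ M) : normRightDeriv p (w + A p + r) ≤ M * ‖p‖ + ‖r‖ := by
  have hAp : ⟪A p, p⟫ ≤ M * ‖p‖ * ‖p‖ :=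
    calc ⟪A p, p⟫ ≤ ‖A p‖ * ‖p‖ := real_inner_le_norm _ _
      _ ≤ M * ‖p‖ * ‖p‖ := by gcongr; exact A.le_of_opNorm_le hA p
  have hr : ⟪r, p⟫ ≤ ‖r‖ * ‖p‖ := real_inner_le_norm _ _
  rw [normRightDeriv, if_neg hp, div_le_iff₀ (norm_pos_iff.2 hp), real_inner_comm,
    inner_add_left, inner_add_left]
  linarith

variable {φ w r : ℝ → E} {A : ℝ → E →L[ℝ] E} {U U' g : ℝ → ℝ} {M a b : ℝ}

theorem norm_le_of_strict_supersolution
    (hφ : ∀ t ∈ Icc a b, HasDerivAt φ (w t + A t (φ t) + r t) t)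
    (hw : ∀ t ∈ Ico a b, ⟪w t, φ t⟫ ≤ 0) (hA : ∀ t ∈ Ico a b, ‖A t‖ ≤ M)
    (hr : ∀ t ∈ Ico a b, ‖r t‖ ≤ g t)
    (hU : ContinuousOn U (Icc a b)) (hU' : ∀ t ∈ Ico a b, HasDerivWithinAt U (U' t) (Ici t) t)
    (ha : ‖φ a‖ ≤ U a)
    (hsuper : ∀ t ∈ Ico a b, ‖φ t‖ = U t → 0 < U t ∧ M * U t + g t < U' t) :
    ∀ t ∈ Icc a b, ‖φ t‖ ≤ U t := by
  have hφc : ContinuousOn φ (Icc a b) := fun t ht => (hφ t ht).continuousAt.continuousWithinAt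
  refine image_le_of_deriv_right_lt_deriv_boundary' hφc.norm
    (fun t ht => (hφ t (Ico_subset_Icc_self ht)).hasDerivWithinAt_norm_Ici) ha hU hU' ?_
  intro t ht heq
  obtain ⟨hUpos, hlt⟩ := hsuper t ht heq
  have hφt : φ t ≠ 0 := norm_pos_iff.1 (heq ▸ hUpos)
  calc normRightDeriv (φ t) (w t + A t (φ t) + r t) ≤ M * ‖φ t‖ + ‖r t‖ :=
        normRightDeriv_add_le hφt (hw t ht) (hA t ht)
    _ ≤ M * U t + g t := by rw [heq]; gcongr; exact hr t ht
    _ < U' t := hlt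

theorem norm_le_of_supersolution
    (hφ : ∀ t ∈ Icc a b, HasDerivAt φ (w t + A t (φ t) + r t) t)
    (hw : ∀ t ∈ Ico a b, ⟪w t, φ t⟫ ≤ 0) (hA : ∀ t ∈ Ico a b, ‖A t‖ ≤ M)
    (hr : ∀ t ∈ Ico a b, ‖r t‖ ≤ g t)
    (hU : ContinuousOn U (Icc a b)) (hU' : ∀ t ∈ Ico a b, HasDerivWithinAt U (U' t) (Ici t) t)
    (ha : ‖φ a‖ ≤ U a) (hU0 : ∀ t ∈ Ico a b, 0 ≤ U t)
    (hsuper : ∀ t ∈ Ico a b, M * U t + g t ≤ U' t) :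
    ∀ t ∈ Icc a b, ‖φ t‖ ≤ U t := by
  have hpert : ∀ δ > 0, ∀ t ∈ Icc a b, ‖φ t‖ ≤ U t + δ * Real.exp ((M + 1) * t) := by
    intro δ hδ
    have hexp : ∀ t, HasDerivAt (fun s => δ * Real.exp ((M + 1) * s))
        (δ * (Real.exp ((M + 1) * t) * (M + 1))) t := fun t => by
      simpa using (((hasDerivAt_id t).const_mul (M + 1)).exp).const_mul δ
    refine norm_le_of_strict_supersolution hφ hw hA hr (hU.add (by fun_prop))
      (fun t ht => (hU' t ht).add (hexp t).hasDerivWithinAt) ?_ ?_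
    · linarith [mul_pos hδ (Real.exp_pos ((M + 1) * a))]
    · intro t ht _
      have := mul_pos hδ (Real.exp_pos ((M + 1) * t))
      exact ⟨by linarith [hU0 t ht], by linarith [hsuper t ht]⟩
  intro t ht
  refine le_of_forall_pos_le_add fun ε hε => ?_
  have hE := Real.exp_pos ((M + 1) * t)
  calc ‖φ t‖ ≤ U t + ε / Real.exp ((M + 1) * t) * Real.exp ((M + 1) * t) :=
        hpert _ (div_pos hε hE) t ht
    _ = U t + ε := by rw [div_mul_cancel₀ _ hE.ne']

end NormRightDeriv

section RemainderBound

variable {L c K M : ℝ}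

noncomputable def remainderBound (L c K M t : ℝ) : ℝ :=
  L * c / (2 * (K - M)) * (Real.exp (2 * K * t) - Real.exp (2 * M * t))

@[simp]
theorem remainderBound_zero : remainderBound L c K M 0 = 0 := by
  simp [remainderBound]

theorem hasDerivAt_remainderBound (t : ℝ) :
    HasDerivAt (remainderBound L c K M)
      (L * c / (2 * (K - M)) * (Real.exp (2 * K * t) * (2 * K) - Real.exp (2 * M * t) * (2 * M)))
      t := by
  have hexp : ∀ k : ℝ,
      HasDerivAt (fun s => Real.exp (2 * k * s)) (Real.exp (2 * k * t) * (2 * k)) t := fun k => by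
    simpa using ((hasDerivAt_id t).const_mul (2 * k)).exp
  exact ((hexp K).sub (hexp M)).const_mul _

theorem remainderBound_monotoneOn (hL : 0 ≤ L) (hc : 0 ≤ c) (hM : 0 ≤ M) (hMK : M < K) :
    MonotoneOn (remainderBound L c K M) (Ici 0) := by
  have hfactor : (fun t => Real.exp (2 * K * t) - Real.exp (2 * M * t)) =
      (fun t => Real.exp (2 * M * t)) * fun t => Real.exp (2 * (K - M) * t) - 1 := by
    ext t
    simp only [Pi.mul_apply, mul_sub, ← Real.exp_add]
    ring_nf
  have hmono : MonotoneOn (fun t => Real.exp (2 * K * t) - Real.exp (2 * M * t)) (Ici 0) := by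
    rw [hfactor]
    refine MonotoneOn.mul ?_ ?_ (fun t _ => (Real.exp_pos _).le) fun t ht => ?_
    · exact fun s _ t _ hst => Real.exp_le_exp.2 (by nlinarith)
    · exact fun s _ t _ hst => sub_le_sub_right (Real.exp_le_exp.2 (by nlinarith)) 1
    · exact sub_nonneg.2 (Real.one_le_exp (mul_nonneg (by linarith) ht))
  exact fun s hs t ht hst =>
    mul_le_mul_of_nonneg_left (hmono hs ht hst) (div_nonneg (mul_nonneg hL hc) (by linarith))

theorem remainderBound_supersolution (hL : 0 ≤ L) (hc : 0 ≤ c) (hM : 0 ≤ M) (hMK : M < K)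
    {t : ℝ} (ht : 0 ≤ t) :
    M * remainderBound L c K M t + L / 2 * c * Real.exp (2 * K * t) ≤
      L * c / (2 * (K - M)) *
        (Real.exp (2 * K * t) * (2 * K) - Real.exp (2 * M * t) * (2 * M)) := by
  set α := L * c / (2 * (K - M))
  have hα : 0 ≤ α := div_nonneg (mul_nonneg hL hc) (by linarith)
  have hforcing : L / 2 * c * Real.exp (2 * K * t) = α * (K - M) * Real.exp (2 * K * t) := by
    have : K - M ≠ 0 := sub_ne_zero.2 hMK.ne'
    simp only [α]; field_simp
  have hrates : M * Real.exp (2 * M * t) ≤ K * Real.exp (2 * K * t) :=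
    mul_le_mul hMK.le (Real.exp_le_exp.2 (by nlinarith)) (Real.exp_pos _).le (hM.trans hMK.le)
  have := mul_nonneg hα (sub_nonneg.2 hrates)
  rw [remainderBound, hforcing]
  linarith

end RemainderBound

theorem quadratic_remainder_estimate_general
    {Z : Type*} [NormedAddCommGroup Z] [InnerProductSpace ℝ Z]
    (L c K M : ℝ) (hL : 0 ≤ L) (hc : 0 ≤ c) (hM : 0 ≤ M) (hMK : M < K)
    (t_f : ℝ)
    (φ w r : ℝ → Z) (B : ℝ → Z →L[ℝ] Z) (hφ0 : φ 0 = 0)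
    (hφ' : ∀ t ∈ Set.Icc (0 : ℝ) t_f, HasDerivAt φ (w t + B t (φ t) + r t) t)
    (hw : ∀ t ∈ Set.Icc (0 : ℝ) t_f, inner ℝ (w t) (φ t) ≤ (0 : ℝ))
    (hB : ∀ t ∈ Set.Icc (0 : ℝ) t_f, ‖B t‖ ≤ M)
    (hr : ∀ t ∈ Set.Icc (0 : ℝ) t_f, ‖r t‖ ≤ (L / 2) * c * Real.exp (2 * K * t)) :
    ∀ t ∈ Set.Icc (0 : ℝ) t_f,
      ‖φ t‖ ≤ (L * c / (2 * (K - M))) *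
        (Real.exp (2 * K * t_f) - Real.exp (2 * M * t_f)) := by
  have hcomparison : ∀ t ∈ Icc 0 t_f, ‖φ t‖ ≤ remainderBound L c K M t :=
    norm_le_of_supersolution hφ' (fun t ht => hw t (Ico_subset_Icc_self ht))
      (fun t ht => hB t (Ico_subset_Icc_self ht)) (fun t ht => hr t (Ico_subset_Icc_self ht))
      (fun t _ => (hasDerivAt_remainderBound t).continuousAt.continuousWithinAt)
      (fun t _ => (hasDerivAt_remainderBound t).hasDerivWithinAt)
      (by simp [hφ0])
      (fun t ht => by simpa using remainderBound_monotoneOn hL hc hM hMK self_mem_Ici ht.1 ht.1)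
      (fun t ht => remainderBound_supersolution hL hc hM hMK ht.1)
  intro t ht
  calc ‖φ t‖ ≤ remainderBound L c K M t := hcomparison t ht
    _ ≤ remainderBound L c K M t_f :=
      remainderBound_monotoneOn hL hc hM hMK ht.1 (ht.1.trans ht.2) ht.2

/-- Quadratic remainder estimate from the proof of Fréchet differentiability of the
semigroup of a quasilinear equation: if `φ(0) = 0` and on `[0, t_f]`
`φ' = w + B φ + r` with `⟨w, φ⟩ ≤ 0`, `‖B(t)‖ ≤ M` and `‖r(t)‖ ≤ (L/2) c e^{2Kt}`,
where `0 ≤ M < K`, then `‖φ(t)‖ ≤ (L c / (2(K − M))) (e^{2K t_f} − e^{2M t_f})`. -/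
theorem quadratic_remainder_estimate
    {Z : Type*} [NormedAddCommGroup Z] [InnerProductSpace ℝ Z] [CompleteSpace Z]
    (L c K M : ℝ) (hL : 0 ≤ L) (hc : 0 ≤ c) (hM : 0 ≤ M) (hMK : M < K)
    (t_f : ℝ) (ht_f : 0 < t_f)
    (φ w r : ℝ → Z) (B : ℝ → Z →L[ℝ] Z) (hφ0 : φ 0 = 0)
    (hφ' : ∀ t ∈ Set.Icc (0 : ℝ) t_f, HasDerivAt φ (w t + B t (φ t) + r t) t)
    (hw : ∀ t ∈ Set.Icc (0 : ℝ) t_f, inner ℝ (w t) (φ t) ≤ (0 : ℝ))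
    (hB : ∀ t ∈ Set.Icc (0 : ℝ) t_f, ‖B t‖ ≤ M)
    (hr : ∀ t ∈ Set.Icc (0 : ℝ) t_f, ‖r t‖ ≤ (L / 2) * c * Real.exp (2 * K * t)) :
    ∀ t ∈ Set.Icc (0 : ℝ) t_f,
      ‖φ t‖ ≤ (L * c / (2 * (K - M))) *
        (Real.exp (2 * K * t_f) - Real.exp (2 * M * t_f)) :=
  quadratic_remainder_estimate_general L c K M hL hc hM hMK t_f φ w r B hφ0 hφ' hw hB hr
end
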